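/- Let T = (M, E) be a tree, ρ a metric on M, and suppose ρ(T) < ∞. Then T is a minimal spanning tree on (M, ρ) if and only if every edge of T is exact, i.e., for each e ∈ E with induced partition {M₁, M₂} of M, one has ρ(e) = inf{ρ(x, y) : x ∈ M₁, y ∈ M₂}. -/

import Mathlib

/-!
If an edge `ab` of an MST were not exact, some `xy` joining the two sides of `T - ab` would be
shorter than `ab`, and `T - ab + xy` would be a shorter spanning tree.

Conversely, let `T'` be any spanning tree. Every finite set `S` of edges of `T` maps injectively
into the edges of `T'` so that each `f ∈ S` goes to an edge crossing the cut of `T - f`: on the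
`T'`-path between the ends of `f` pick an edge `xy` crossing that cut; `T' - xy + f` is still
connected, so recurse on `S \ {f}` there. Exactness gives `ρ(f) ≤ ρ(φ f)`, hence every finite
partial sum of `ρ(T)` is at most `ρ(T')`.
-/

open scoped ENNReal

namespace MSTPaper

variable {M : Type*}

/-- The length of an edge `e` of a graph on a metric space: the extended
distance between its endpoints. -/
noncomputable def edgeLen [MetricSpace M] (e : Sym2 M) : ℝ≥0∞ :=
  Sym2.lift ⟨fun x y => edist x y, fun x y => edist_comm x y⟩ e

/-- The length of a graph: the (possibly infinite) sum of the lengths of its edges. -/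
noncomputable def graphLen [MetricSpace M] (G : SimpleGraph M) : ℝ≥0∞ :=
  ∑' e : G.edgeSet, edgeLen (e : Sym2 M)

/-- The distance between two subsets of a metric space. -/
noncomputable def setDist [MetricSpace M] (A B : Set M) : ℝ≥0∞ :=
  ⨅ x ∈ A, ⨅ y ∈ B, edist x y

/-- A minimal spanning tree on the metric space `M`: a spanning tree of finite
length whose length equals the infimum of lengths of all spanning trees on `M`. -/
def IsMST [MetricSpace M] (T : SimpleGraph M) : Prop :=
  T.IsTree ∧ graphLen T < ⊤ ∧ ∀ T' : SimpleGraph M, T'.IsTree → graphLen T ≤ graphLen T'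

/-- An edge `uv` of `G` is exact if its length equals the distance between the
two connected components obtained by removing it. -/
def ExactEdge [MetricSpace M] (G : SimpleGraph M) (u v : M) : Prop :=
  edist u v = setDist {x | (G.deleteEdges {s(u,v)}).Reachable u x}
                      {x | (G.deleteEdges {s(u,v)}).Reachable v x}

end MSTPaper

namespace SimpleGraph

variable {V : Type*} {G T : SimpleGraph V} {a b u v x y : V}

lemma IsAcyclic.not_reachable_deleteEdges (hT : T.IsAcyclic) (hab : T.Adj a b) :
    ¬(T.deleteEdges {s(a, b)}).Reachable a b :=
  isBridge_iff.mp (isAcyclic_iff_forall_adj_isBridge.mp hT hab)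

lemma Preconnected.reachable_deleteEdges_or (hG : G.Preconnected) (u v z : V) :
    (G.deleteEdges {s(u, v)}).Reachable u z ∨ (G.deleteEdges {s(u, v)}).Reachable v z := by
  induction (reachable_iff_reflTransGen u z).mp (hG u z) with
  | refl => exact .inl .rfl
  | @tail b c _ hbc ih =>
    by_cases he : s(b, c) = s(u, v)
    · rcases Sym2.eq_iff.mp he with ⟨-, rfl⟩ | ⟨-, rfl⟩
      exacts [.inr .rfl, .inl .rfl]
    · have hbc' : (G.deleteEdges {s(u, v)}).Adj b c := by simpa [hbc] using he
      exact ih.imp (·.trans hbc'.reachable) (·.trans hbc'.reachable)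

lemma Walk.IsPath.exists_boundary_edge {A : Set V} {p : G.Walk u v} (hp : p.IsPath)
    (hu : u ∈ A) (hv : v ∉ A) :
    ∃ x y, G.Adj x y ∧ x ∈ A ∧ y ∉ A ∧
      (G.deleteEdges {s(x, y)}).Reachable u x ∧ (G.deleteEdges {s(x, y)}).Reachable y v := by
  induction p with
  | nil => exact absurd hu hv
  | @cons a b c hab q ih =>
    rw [Walk.cons_isPath_iff] at hp
    by_cases hb : b ∈ A
    · obtain ⟨x, y, hxy, hx, hy, hbx, hyc⟩ := ih hp.1 hb hv
      have hne : s(a, b) ≠ s(x, y) := by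
        intro h
        rcases Sym2.eq_iff.mp h with ⟨-, rfl⟩ | ⟨rfl, -⟩ <;> contradiction
      have hab' : (G.deleteEdges {s(x, y)}).Adj a b := by simpa [hab] using hne
      exact ⟨x, y, hxy, hx, hy, hab'.reachable.trans hbx, hyc⟩
    · refine ⟨a, b, hab, hu, hb, .rfl, reachable_deleteEdges_iff_exists_walk.mpr ⟨q, ?_⟩⟩
      exact fun h => hp.2 (q.fst_mem_support_of_mem_edges h)

lemma Connected.deleteEdges_sup_edge (hG : G.Connected) (huv : u ≠ v)
    (hux : (G.deleteEdges {s(x, y)}).Reachable u x)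
    (hyv : (G.deleteEdges {s(x, y)}).Reachable y v) :
    (G.deleteEdges {s(x, y)} ⊔ edge u v).Connected := by
  have hle : G.deleteEdges {s(x, y)} ≤ G.deleteEdges {s(x, y)} ⊔ edge u v := le_sup_left
  have huv' : (G.deleteEdges {s(x, y)} ⊔ edge u v).Adj u v := Or.inr (by simp [edge_adj, huv])
  have hxy : (G.deleteEdges {s(x, y)} ⊔ edge u v).Reachable x y :=
    (hux.mono hle).symm.trans (huv'.reachable.trans (hyv.mono hle).symm)
  have hx : ∀ z, (G.deleteEdges {s(x, y)} ⊔ edge u v).Reachable x z := fun z =>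
    (hG.preconnected.reachable_deleteEdges_or x y z).elim (·.mono hle) (hxy.trans <| ·.mono hle)
  have := hG.nonempty
  exact ⟨fun z w => (hx z).symm.trans (hx w)⟩

lemma IsTree.deleteEdges_sup_edge (hT : T.IsTree) (hab : T.Adj a b)
    (hx : (T.deleteEdges {s(a, b)}).Reachable a x)
    (hy : (T.deleteEdges {s(a, b)}).Reachable b y) :
    (T.deleteEdges {s(a, b)} ⊔ edge x y).IsTree := by
  have hxy : ¬(T.deleteEdges {s(a, b)}).Reachable x y := fun h =>
    hT.isAcyclic.not_reachable_deleteEdges hab (hx.trans (h.trans hy.symm))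
  exact ⟨hT.connected.deleteEdges_sup_edge (by rintro rfl; exact hxy .rfl) hx.symm hy,
    (hT.isAcyclic.anti (deleteEdges_le _)).sup_edge_of_not_reachable hxy⟩

end SimpleGraph

namespace MSTPaper

open SimpleGraph

variable {M : Type*}

def CrossesCut (T : SimpleGraph M) (f e : Sym2 M) : Prop :=
  Sym2.lift ⟨fun x y => ¬(T.deleteEdges {f}).Reachable x y,
    fun x y => by simp only [reachable_comm]⟩ e

variable {G T : SimpleGraph M} {a b u v x y : M}

lemma exists_crossesCut_connected_exchange (hT : T.IsAcyclic) (huv : T.Adj u v)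
    (hG : G.Connected) :
    ∃ x y, G.Adj x y ∧ CrossesCut T s(u, v) s(x, y) ∧
      (G.deleteEdges {s(x, y)} ⊔ edge u v).Connected := by
  classical
  obtain ⟨p, hp⟩ := (hG.preconnected u v).some.toPath
  obtain ⟨x, y, hxy, hx, hy, hux, hyv⟩ :=
    hp.exists_boundary_edge (A := {z | (T.deleteEdges {s(u, v)}).Reachable u z}) .rfl
      (hT.not_reachable_deleteEdges huv)
  exact ⟨x, y, hxy, fun h => hy (hx.trans h), hG.deleteEdges_sup_edge huv.ne hux hyv⟩

lemma exists_injOn_crossesCut (hT : T.IsAcyclic) (S : Finset (Sym2 M))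
    (hS : ↑S ⊆ T.edgeSet) (hG : G.Connected) :
    ∃ φ : Sym2 M → Sym2 M, Set.InjOn φ S ∧ Set.MapsTo φ S G.edgeSet ∧
      ∀ f ∈ S, CrossesCut T f (φ f) := by
  classical
  induction S using Finset.induction_on generalizing G with
  | empty => exact ⟨id, by simp, fun _ h => by simp at h, by simp⟩
  | insert f S hfS ih =>
    induction f using Sym2.ind with | h u v => ?_
    rw [Finset.coe_insert, Set.insert_subset_iff] at hS
    obtain ⟨x, y, hxy, hcut, hG'⟩ := exists_crossesCut_connected_exchange hT hS.1 hG
    obtain ⟨φ, hinj, hmaps, hφ⟩ := ih hS.2 hG'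
    have hne : ∀ g ∈ S, g ≠ s(u, v) := fun g hg => ne_of_mem_of_not_mem hg hfS
    -- `φ` misses `uv`: it survives in `T` minus any other edge `g`, so crosses no other cut.
    have hφG : ∀ g ∈ S, φ g ∈ G.edgeSet ∧ φ g ≠ s(x, y) := by
      intro g hg
      have huv : (T.deleteEdges {g}).Adj u v :=
        (deleteEdges_adj ..).mpr ⟨hS.1, by simpa using (hne g hg).symm⟩
      have hφuv : φ g ≠ s(u, v) := fun h =>
        (h ▸ hφ g hg : CrossesCut T g s(u, v)) huv.reachable
      simpa [hφuv] using hmaps hg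
    have heq : Set.EqOn (Function.update φ s(u, v) s(x, y)) φ S := fun g hg =>
      Function.update_of_ne (hne g hg) _ _
    refine ⟨Function.update φ s(u, v) s(x, y), ?_, ?_, ?_⟩
    · rw [Finset.coe_insert, Set.injOn_insert hfS, Function.update_self, heq.image_eq]
      exact ⟨hinj.congr heq.symm, fun ⟨g, hg, hgxy⟩ => (hφG g hg).2 hgxy⟩
    · rw [Finset.coe_insert]
      rintro g (rfl | hg)
      · simpa using hxy
      · simpa [heq hg] using (hφG g hg).1
    · intro g hg
      rcases Finset.mem_insert.mp hg with rfl | hg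
      · simpa using hcut
      · simpa [heq hg] using hφ g hg

section Metric

variable [MetricSpace M]

lemma edgeLen_mk (x y : M) : edgeLen s(x, y) = edist x y := rfl

lemma sum_edgeLen_le_graphLen {S : Finset (Sym2 M)} (hS : ↑S ⊆ G.edgeSet) :
    ∑ e ∈ S, edgeLen e ≤ graphLen G := by
  rw [graphLen, tsum_subtype]
  calc ∑ e ∈ S, edgeLen e = ∑ e ∈ S, G.edgeSet.indicator edgeLen e :=
        Finset.sum_congr rfl fun e he => (Set.indicator_of_mem (hS he) _).symm
    _ ≤ _ := ENNReal.sum_le_tsum _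

lemma graphLen_le_of_forall_finset {c : ℝ≥0∞}
    (h : ∀ S : Finset (Sym2 M), ↑S ⊆ G.edgeSet → ∑ e ∈ S, edgeLen e ≤ c) :
    graphLen G ≤ c := by
  rw [graphLen, ENNReal.tsum_eq_iSup_sum]
  refine iSup_le fun S => ?_
  simpa using h (S.map (Function.Embedding.subtype _)) (by simp)

lemma graphLen_eq_deleteEdges_add {e : Sym2 M} (he : e ∈ G.edgeSet) :
    graphLen G = graphLen (G.deleteEdges {e}) + edgeLen e := by
  rw [graphLen, graphLen, edgeSet_deleteEdges, ← tsum_singleton e edgeLen,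
    ← ENNReal.summable.tsum_union_disjoint Set.disjoint_sdiff_left ENNReal.summable,
    Set.sdiff_union_of_subset (Set.singleton_subset_iff.mpr he)]

lemma graphLen_sup_edge_le (G : SimpleGraph M) (x y : M) :
    graphLen (G ⊔ edge x y) ≤ graphLen G + edist x y := by
  rw [graphLen, graphLen, ← edgeLen_mk, ← tsum_singleton s(x, y) edgeLen]
  refine (ENNReal.tsum_mono_subtype _ ?_).trans (ENNReal.tsum_union_le _ _ _)
  rw [edgeSet_sup]
  exact Set.union_subset_union_right _ (edgeSet_edge_subset)

lemma graphLen_deleteEdges_sup_edge_lt (hfin : graphLen G < ⊤) (hab : G.Adj a b)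
    (hlt : edist x y < edist a b) :
    graphLen (G.deleteEdges {s(a, b)} ⊔ edge x y) < graphLen G := by
  have hsplit := graphLen_eq_deleteEdges_add (G.mem_edgeSet.mpr hab)
  have hrest : graphLen (G.deleteEdges {s(a, b)}) ≠ ⊤ :=
    (ENNReal.add_lt_top.mp (hsplit ▸ hfin)).1.ne
  calc graphLen (G.deleteEdges {s(a, b)} ⊔ edge x y)
      ≤ graphLen (G.deleteEdges {s(a, b)}) + edist x y := graphLen_sup_edge_le _ x y
    _ < graphLen (G.deleteEdges {s(a, b)}) + edist a b := ENNReal.add_lt_add_left hrest hlt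
    _ = graphLen G := hsplit.symm

lemma setDist_le_edist {A B : Set M} (ha : a ∈ A) (hb : b ∈ B) :
    setDist A B ≤ edist a b :=
  iInf₂_le_of_le a ha (iInf₂_le b hb)

lemma le_setDist_iff {A B : Set M} {c : ℝ≥0∞} :
    c ≤ setDist A B ↔ ∀ x ∈ A, ∀ y ∈ B, c ≤ edist x y := by
  simp only [setDist, le_iInf_iff]

lemma exactEdge_iff :
    ExactEdge G a b ↔ ∀ x, (G.deleteEdges {s(a, b)}).Reachable a x →
      ∀ y, (G.deleteEdges {s(a, b)}).Reachable b y → edist a b ≤ edist x y := by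
  rw [ExactEdge, le_antisymm_iff, and_iff_left (setDist_le_edist .rfl .rfl), le_setDist_iff]
  rfl

lemma ExactEdge.edgeLen_le {e : Sym2 M} (hab : ExactEdge T a b)
    (hT : T.Preconnected) (he : CrossesCut T s(a, b) e) : edgeLen s(a, b) ≤ edgeLen e := by
  induction e using Sym2.ind with | h x y => ?_
  have hxy : ¬(T.deleteEdges {s(a, b)}).Reachable x y := he
  rw [exactEdge_iff] at hab
  rcases hT.reachable_deleteEdges_or a b x with hx | hx <;>
    rcases hT.reachable_deleteEdges_or a b y with hy | hy
  · exact absurd (hx.symm.trans hy) hxy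
  · exact hab x hx y hy
  · rw [edgeLen_mk, edgeLen_mk, edist_comm x]
    exact hab y hy x hx
  · exact absurd (hx.symm.trans hy) hxy

lemma sum_edgeLen_le_graphLen_of_injOn {S : Finset (Sym2 M)}
    {φ : Sym2 M → Sym2 M} (hinj : Set.InjOn φ S) (hmaps : Set.MapsTo φ S G.edgeSet)
    (hle : ∀ f ∈ S, edgeLen f ≤ edgeLen (φ f)) :
    ∑ f ∈ S, edgeLen f ≤ graphLen G := by
  classical
  calc ∑ f ∈ S, edgeLen f ≤ ∑ f ∈ S, edgeLen (φ f) := Finset.sum_le_sum hle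
    _ = ∑ e ∈ S.image φ, edgeLen e := (Finset.sum_image hinj).symm
    _ ≤ graphLen G := sum_edgeLen_le_graphLen (by simpa using hmaps.image_subset)

end Metric

/-- A spanning tree of finite length is a minimal spanning tree iff all its edges
are exact. -/
theorem mst_iff_all_edges_exact [MetricSpace M] (T : SimpleGraph M) (hT : T.IsTree)
    (hfin : graphLen T < ⊤) :
    IsMST T ↔ ∀ a b : M, T.Adj a b → ExactEdge T a b := by
  refine ⟨fun hmst a b hab => ?_, fun hexact => ⟨hT, hfin, fun T' hT' => ?_⟩⟩
  · rw [exactEdge_iff]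
    intro x hx y hy
    by_contra! hlt
    exact (hmst.2.2 _ (hT.deleteEdges_sup_edge hab hx hy)).not_gt
      (graphLen_deleteEdges_sup_edge_lt hfin hab hlt)
  · refine graphLen_le_of_forall_finset fun S hS => ?_
    obtain ⟨φ, hinj, hmaps, hcut⟩ := exists_injOn_crossesCut hT.isAcyclic S hS hT'.connected
    refine sum_edgeLen_le_graphLen_of_injOn hinj hmaps fun f hf => ?_
    induction f using Sym2.ind with
    | h a b => exact (hexact a b (hS hf)).edgeLen_le hT.connected.preconnected (hcut _ hf)

end MSTPaper
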